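/- Let d ≥ 1 and let P, Q be complex polynomials such that: (1) deg P ≤ d and deg Q ≤ d−1; (2) every monomial of P has exponent congruent to d mod 2 and every monomial of Q has exponent congruent to (d−1) mod 2; (3) |P(x)|² + (1−x²)|Q(x)|² = 1 for all x ∈ [−1,1]. Then there exist phase factors Ψ = (ψ_0, …, ψ_d) ∈ ℝ^{d+1} such that for all x ∈ [−1,1], U(x,Ψ) = [[P(x), i√(1−x²)·Q(x)], [i√(1−x²)·Q*(x), P*(x)]], where P*, Q* denote the polynomials obtained by complex-conjugating all coefficients of P, Q. -/

import Mathlib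

open Matrix Polynomial Complex

/-- The Pauli X matrix. -/
noncomputable def PX : Matrix (Fin 2) (Fin 2) ℂ := !![0, 1; 1, 0]

/-- The Pauli Z matrix. -/
noncomputable def PZ : Matrix (Fin 2) (Fin 2) ℂ := !![1, 0; 0, -1]

/-- The QSP unitary `U(x, Ψ) = e^{iψ₀Z} ∏_{j=1}^d e^{i arccos(x) X} e^{iψⱼ Z}`,
the product taken with `j` increasing from left to right. -/
noncomputable def qspU (d : ℕ) (Ψ : Fin (d + 1) → ℝ) (x : ℝ) : Matrix (Fin 2) (Fin 2) ℂ :=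
  NormedSpace.exp ((Complex.I * (Ψ 0 : ℂ)) • PZ) *
    ((List.finRange d).map (fun j =>
      NormedSpace.exp ((Complex.I * (Real.arccos x : ℂ)) • PX) *
      NormedSpace.exp ((Complex.I * ((Ψ j.succ : ℝ) : ℂ)) • PZ))).prod

/-- The matrix `[[P(x), i√(1-x²) Q(x)], [i√(1-x²) Q*(x), P*(x)]]`, where `P*`, `Q*` have
complex-conjugated coefficients. -/
noncomputable def qspMat (P Q : Polynomial ℂ) (x : ℝ) : Matrix (Fin 2) (Fin 2) ℂ :=
  !![P.eval (x : ℂ), Complex.I * (Real.sqrt (1 - x ^ 2) : ℂ) * Q.eval (x : ℂ);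
     Complex.I * (Real.sqrt (1 - x ^ 2) : ℂ) * (Q.map (starRingEnd ℂ)).eval (x : ℂ),
     (P.map (starRingEnd ℂ)).eval (x : ℂ)]


/-!
Induction on `d`, peeling off the last factor `e^{i arccos(x) X} e^{iψZ}`. If `(P, Q)` satisfies
the hypotheses in degree `d + 1`, comparing the coefficients of `x^{2d+2}` in the polynomial
identity `P P* + (1 - x²) Q Q* = 1` shows that the leading coefficients `P_{d+1}` and `Q_d` have
the same modulus, so some phase `u = e^{iψ}` satisfies `ū P_{d+1} = u Q_d`. Multiplying the
target matrix on the right by the inverse of `e^{i arccos(x) X} e^{iψZ}` gives the target matrix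
of a pair `(P', Q')` satisfying the hypotheses in degree `d`: the choice of `u` cancels the top
coefficients and parity the next ones. In degree `0`, `Q = 0` and `P` is a unimodular constant,
that is `e^{iψ₀Z}`.
-/

namespace Polynomial

variable {R : Type*}

section Semiring

variable [Semiring R] {p q : R[X]} {k n : ℕ}

def HasParity (p : R[X]) (k : ℕ) : Prop :=
  ∀ n, p.coeff n ≠ 0 → n % 2 = k % 2

theorem HasParity.coeff_eq_zero (hp : p.HasParity k) (hn : n % 2 ≠ k % 2) : p.coeff n = 0 :=
  not_not.mp fun h => hn (hp n h)

theorem HasParity.of_mod_two_eq (hp : p.HasParity k) (hkn : k % 2 = n % 2) : p.HasParity n :=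
  fun m hm => (hp m hm).trans hkn

theorem HasParity.add (hp : p.HasParity k) (hq : q.HasParity k) : (p + q).HasParity k := by
  intro n hn
  by_contra h
  rw [coeff_add, hp.coeff_eq_zero h, hq.coeff_eq_zero h, add_zero] at hn
  exact hn rfl

theorem HasParity.C_mul (hp : p.HasParity k) (a : R) : (C a * p).HasParity k := by
  intro n hn
  by_contra h
  rw [coeff_C_mul, hp.coeff_eq_zero h, mul_zero] at hn
  exact hn rfl

theorem HasParity.X_pow_mul (hp : p.HasParity k) (m : ℕ) : (X ^ m * p).HasParity (k + m) := by
  intro n hn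
  rw [coeff_X_pow_mul'] at hn
  split_ifs at hn with h
  · have := hp _ hn; omega
  · exact absurd rfl hn

theorem HasParity.X_mul (hp : p.HasParity k) : (X * p).HasParity (k + 1) := by
  simpa using hp.X_pow_mul 1

theorem HasParity.natDegree_le_pred (hp : p.HasParity k) (hn : p.natDegree ≤ n)
    (hkn : n % 2 ≠ k % 2) : p.natDegree ≤ n - 1 :=
  Polynomial.natDegree_le_pred hn (hp.coeff_eq_zero hkn)

theorem HasParity.sub_two_of_natDegree_le (hp : p.HasParity (n + 1))
    (hn : p.natDegree ≤ n - 1) : p.HasParity (n - 1) := by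
  intro m hm
  have := (le_natDegree_of_ne_zero hm).trans hn
  have := hp m hm
  omega

end Semiring

theorem HasParity.sub [Ring R] {p q : R[X]} {k : ℕ} (hp : p.HasParity k) (hq : q.HasParity k) :
    (p - q).HasParity k := by
  intro n hn
  by_contra h
  rw [coeff_sub, hp.coeff_eq_zero h, hq.coeff_eq_zero h, sub_zero] at hn
  exact hn rfl

end Polynomial

open ComplexConjugate

theorem exp_smul_PZ (t : ℂ) :
    NormedSpace.exp (t • PZ) = !![Complex.exp t, 0; 0, Complex.exp (-t)] := by
  have hdiag : t • PZ = diagonal ![t, -t] := by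
    ext i j; fin_cases i <;> fin_cases j <;> simp [PZ]
  rw [hdiag, exp_diagonal]
  ext i j; fin_cases i <;> fin_cases j <;> simp [← Complex.exp_eq_exp_ℂ]

theorem exp_smul_PX (t : ℂ) :
    NormedSpace.exp (t • PX) =
      !![Complex.cosh t, Complex.sinh t; Complex.sinh t, Complex.cosh t] := by
  set H : Matrix (Fin 2) (Fin 2) ℂ := !![1, 1; 1, -1]
  have hHinv : H⁻¹ = !![1 / 2, 1 / 2; 1 / 2, -(1 / 2)] := inv_eq_right_inv <| by
    ext i j; fin_cases i <;> fin_cases j <;> norm_num [H]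
  have hH : IsUnit H := by
    rw [isUnit_iff_isUnit_det]; norm_num [H, det_fin_two_of]
  have hconj : t • PX = H * diagonal ![t, -t] * H⁻¹ := by
    rw [hHinv]
    ext i j
    fin_cases i <;> fin_cases j <;>
      simp [H, PX, vecMul_diagonal, mul_apply, Fin.sum_univ_two] <;> ring
  rw [hconj, exp_conj _ _ hH, exp_diagonal, hHinv, Complex.cosh, Complex.sinh]
  ext i j
  fin_cases i <;> fin_cases j <;>
    simp [H, vecMul_diagonal, mul_apply, Fin.sum_univ_two, ← Complex.exp_eq_exp_ℂ] <;> ring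

theorem exp_I_mul_smul_PZ (ψ : ℝ) :
    NormedSpace.exp ((Complex.I * ψ) • PZ) =
      !![Complex.exp (Complex.I * ψ), 0; 0, conj (Complex.exp (Complex.I * ψ))] := by
  rw [exp_smul_PZ, ← Complex.exp_conj]
  simp

theorem exp_I_mul_arccos_smul_PX {x : ℝ} (hx : x ∈ Set.Icc (-1 : ℝ) 1) :
    NormedSpace.exp ((Complex.I * Real.arccos x) • PX) =
      !![(x : ℂ), Complex.I * √(1 - x ^ 2); Complex.I * √(1 - x ^ 2), (x : ℂ)] := by
  rw [exp_smul_PX, mul_comm, Complex.cosh_mul_I, Complex.sinh_mul_I, ← Complex.ofReal_cos,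
    ← Complex.ofReal_sin, Real.cos_arccos hx.1 hx.2, Real.sin_arccos, mul_comm]

theorem qspU_zero (Ψ : Fin 1 → ℝ) (x : ℝ) :
    qspU 0 Ψ x = NormedSpace.exp ((Complex.I * (Ψ 0 : ℂ)) • PZ) := by
  simp [qspU]

theorem qspU_succ (d : ℕ) (Ψ : Fin (d + 2) → ℝ) (x : ℝ) :
    qspU (d + 1) Ψ x = qspU d (Fin.init Ψ) x *
      (NormedSpace.exp ((Complex.I * (Real.arccos x : ℂ)) • PX) *
       NormedSpace.exp ((Complex.I * (Ψ (Fin.last (d + 1)) : ℂ)) • PZ)) := by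
  unfold qspU
  rw [List.finRange_succ_last, List.map_append, List.prod_append, List.map_map]
  simp [mul_assoc, Function.comp_def, Fin.init, Fin.succ_castSucc, -Fin.castSucc_succ]

theorem eval_map_conj_ofReal (p : ℂ[X]) (x : ℝ) :
    (p.map (starRingEnd ℂ)).eval (x : ℂ) = conj (p.eval (x : ℂ)) := by
  rw [eval_map, ← eval₂_at_apply, Complex.conj_ofReal]

theorem mul_map_conj_add_eq_one_of_forall_Icc {P Q : ℂ[X]}
    (h : ∀ x ∈ Set.Icc (-1 : ℝ) 1,
      ‖P.eval (x : ℂ)‖ ^ 2 + (1 - x ^ 2) * ‖Q.eval (x : ℂ)‖ ^ 2 = 1) :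
    P * P.map (starRingEnd ℂ) + (1 - X ^ 2) * (Q * Q.map (starRingEnd ℂ)) = 1 := by
  refine eq_of_infinite_eval_eq _ _ <|
    ((Set.Icc_infinite (by norm_num : (-1 : ℝ) < 1)).image Complex.ofReal_injective.injOn).mono ?_
  rintro _ ⟨x, hx, rfl⟩
  have hx := congrArg (fun r : ℝ => (r : ℂ)) (h x hx)
  simp only [Set.mem_ofPred_eq, eval_add, eval_mul, eval_sub, eval_pow, eval_one, eval_X,
    eval_map_conj_ofReal, Complex.mul_conj']
  push_cast at hx ⊢
  exact hx

theorem norm_coeff_succ_eq_of_mul_map_conj_add_eq_one {P Q : ℂ[X]} {e : ℕ}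
    (hP : P.natDegree ≤ e + 1) (hQ : Q.natDegree ≤ e)
    (h : P * P.map (starRingEnd ℂ) + (1 - X ^ 2) * (Q * Q.map (starRingEnd ℂ)) = 1) :
    ‖P.coeff (e + 1)‖ = ‖Q.coeff e‖ := by
  have hQQ : (Q * Q.map (starRingEnd ℂ)).natDegree ≤ e + e :=
    natDegree_mul_le_of_le hQ (natDegree_map_le.trans hQ)
  have hcoeff := congrArg (coeff · ((e + e) + 2)) h
  simp only [sub_mul, one_mul, coeff_add, coeff_sub, coeff_X_pow_mul, coeff_one] at hcoeff
  rw [show e + e + 2 = (e + 1) + (e + 1) by ring,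
    coeff_mul_add_eq_of_natDegree_le hP (natDegree_map_le.trans hP),
    coeff_eq_zero_of_natDegree_lt (hQQ.trans_lt (by omega)),
    coeff_mul_add_eq_of_natDegree_le hQ (natDegree_map_le.trans hQ)] at hcoeff
  simp only [coeff_map, Complex.mul_conj', zero_sub, if_neg (by omega : e + 1 + (e + 1) ≠ 0)]
    at hcoeff
  have hsq : ‖P.coeff (e + 1)‖ ^ 2 = ‖Q.coeff e‖ ^ 2 := by
    exact_mod_cast (add_neg_eq_zero.mp hcoeff)
  exact (sq_eq_sq₀ (norm_nonneg _) (norm_nonneg _)).mp hsq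

theorem exists_phase_of_norm_eq {p q : ℂ} (h : ‖p‖ = ‖q‖) :
    ∃ ψ : ℝ, conj (Complex.exp (Complex.I * ψ)) * p = Complex.exp (Complex.I * ψ) * q := by
  rcases eq_or_ne q 0 with rfl | hq
  · exact ⟨0, by simp [norm_eq_zero.mp (h.trans norm_zero)]⟩
  refine ⟨(p / q).arg / 2, ?_⟩
  set u := Complex.exp (Complex.I * ((p / q).arg / 2 : ℝ))
  have hu : conj u * u = 1 := by
    rw [Complex.conj_mul', Complex.norm_exp_I_mul_ofReal, Complex.ofReal_one, one_pow]
  have hu2 : u * u = p / q := by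
    conv_rhs => rw [← Complex.norm_mul_exp_arg_mul_I (p / q)]
    rw [← Complex.exp_add, norm_div, h, div_self (norm_ne_zero_iff.mpr hq)]
    push_cast; ring_nf
  calc conj u * p = conj u * (u * u * q) := by rw [hu2, div_mul_cancel₀ _ hq]
    _ = u * q := by linear_combination (u * q) * hu

structure IsQSPPair (d : ℕ) (P Q : ℂ[X]) : Prop where
  natDegree_P_le : P.natDegree ≤ d
  natDegree_Q_le : Q.natDegree ≤ d - 1
  hasParity_P : P.HasParity d
  hasParity_Q : Q.HasParity (d - 1)
  mul_map_conj_add_eq_one :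
    P * P.map (starRingEnd ℂ) + (1 - X ^ 2) * (Q * Q.map (starRingEnd ℂ)) = 1

theorem IsQSPPair.exists_eq_C {P Q : ℂ[X]} (h : IsQSPPair 0 P Q) :
    ∃ p : ℂ, ‖p‖ = 1 ∧ P = C p ∧ Q = 0 := by
  have hP := eq_C_of_natDegree_le_zero h.natDegree_P_le
  have hQ := eq_C_of_natDegree_le_zero h.natDegree_Q_le
  have hq : Q.coeff 0 = 0 := by
    have := norm_coeff_succ_eq_of_mul_map_conj_add_eq_one (e := 0)
      (h.natDegree_P_le.trans zero_le_one) h.natDegree_Q_le h.mul_map_conj_add_eq_one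
    rwa [zero_add, coeff_eq_zero_of_natDegree_lt (h.natDegree_P_le.trans_lt zero_lt_one),
      norm_zero, eq_comm, norm_eq_zero] at this
  rw [hq, C_0] at hQ
  have hp := congrArg (coeff · 0) h.mul_map_conj_add_eq_one
  rw [hP, hQ] at hp
  simp only [map_C, ← C_mul, Complex.mul_conj', zero_mul, mul_zero, add_zero, coeff_C_zero,
    coeff_one_zero] at hp
  refine ⟨P.coeff 0, ?_, hP, hQ⟩
  exact (pow_eq_one_iff_of_nonneg (norm_nonneg _) two_ne_zero).mp (by exact_mod_cast hp)

/-- With `u = e^{iψ}`, `peelP u P Q` and `peelQ u P Q` are read off from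
`qspMat P Q x * (e^{i arccos(x) X} e^{iψZ})⁻¹`. -/
noncomputable def peelP (u : ℂ) (P Q : ℂ[X]) : ℂ[X] :=
  C (conj u) * (X * P) + C u * (Q - X ^ 2 * Q)

noncomputable def peelQ (u : ℂ) (P Q : ℂ[X]) : ℂ[X] := C u * (X * Q) - C (conj u) * P

theorem map_conj_peelP (u : ℂ) (P Q : ℂ[X]) :
    (peelP u P Q).map (starRingEnd ℂ) =
      peelP (conj u) (P.map (starRingEnd ℂ)) (Q.map (starRingEnd ℂ)) := by
  simp [peelP]

theorem map_conj_peelQ (u : ℂ) (P Q : ℂ[X]) :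
    (peelQ u P Q).map (starRingEnd ℂ) =
      peelQ (conj u) (P.map (starRingEnd ℂ)) (Q.map (starRingEnd ℂ)) := by
  simp [peelQ]

theorem IsQSPPair.peel {e : ℕ} {P Q : ℂ[X]} {u : ℂ} (h : IsQSPPair (e + 1) P Q)
    (hu : conj u * u = 1) (hlead : conj u * P.coeff (e + 1) = u * Q.coeff e) :
    IsQSPPair e (peelP u P Q) (peelQ u P Q) := by
  have hP := h.natDegree_P_le
  have hQ : Q.natDegree ≤ e := h.natDegree_Q_le
  have hQpar : Q.HasParity e := h.hasParity_Q
  have hparP : (peelP u P Q).HasParity e :=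
    ((h.hasParity_P.X_mul.of_mod_two_eq (by omega)).C_mul _).add
      ((hQpar.sub ((hQpar.X_pow_mul 2).of_mod_two_eq (by omega))).C_mul _)
  have hparQ : (peelQ u P Q).HasParity (e + 1) :=
    (hQpar.X_mul.C_mul _).sub (h.hasParity_P.C_mul _)
  have hdegP : (peelP u P Q).natDegree ≤ e + 1 := by
    refine natDegree_le_pred (n := e + 2) (by unfold peelP; compute_degree; omega) ?_
    simp only [peelP, coeff_add, coeff_sub, coeff_C_mul, coeff_X_mul, coeff_X_pow_mul,
      coeff_eq_zero_of_natDegree_lt (hQ.trans_lt (by omega : e < e + 2))]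
    linear_combination hlead
  have hdegQ : (peelQ u P Q).natDegree ≤ e := by
    refine natDegree_le_pred (n := e + 1) (by unfold peelQ; compute_degree; omega) ?_
    simp only [peelQ, coeff_sub, coeff_C_mul, coeff_X_mul]
    linear_combination -hlead
  have hdegQ' : (peelQ u P Q).natDegree ≤ e - 1 := hparQ.natDegree_le_pred hdegQ (by omega)
  refine ⟨hparP.natDegree_le_pred hdegP (by omega), hdegQ', hparP,
    hparQ.sub_two_of_natDegree_le hdegQ', ?_⟩
  have huC : C (conj u) * C u = (1 : ℂ[X]) := by rw [← C_mul, hu, C_1]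
  rw [map_conj_peelP, map_conj_peelQ]
  simp only [peelP, peelQ, Complex.conj_conj]
  linear_combination (C (conj u) * C u) * h.mul_map_conj_add_eq_one + huC

theorem qspMat_eq_qspMat_peel_mul {P Q : ℂ[X]} {u : ℂ} {x : ℝ} (hx : x ∈ Set.Icc (-1 : ℝ) 1)
    (hu : conj u * u = 1) :
    qspMat P Q x = qspMat (peelP u P Q) (peelQ u P Q) x *
      (!![(x : ℂ), Complex.I * √(1 - x ^ 2); Complex.I * √(1 - x ^ 2), (x : ℂ)] *
        !![u, 0; 0, conj u]) := by
  have ht : (Complex.I * √(1 - x ^ 2)) ^ 2 = (x : ℂ) ^ 2 - 1 := by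
    rw [mul_pow, Complex.I_sq, ← Complex.ofReal_pow, Real.sq_sqrt (by nlinarith [hx.1, hx.2])]
    push_cast; ring
  rw [qspMat, qspMat, map_conj_peelP, map_conj_peelQ]
  simp only [peelP, peelQ, eval_add, eval_sub, eval_mul, eval_C, eval_X, eval_pow,
    Complex.conj_conj, mul_fin_two]
  set a := P.eval (x : ℂ)
  set b := Q.eval (x : ℂ)
  set a' := (P.map (starRingEnd ℂ)).eval (x : ℂ)
  set b' := (Q.map (starRingEnd ℂ)).eval (x : ℂ)
  ext i j
  fin_cases i <;> fin_cases j <;> simp only [Fin.zero_eta, Fin.mk_one, of_apply, cons_val',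
    cons_val_zero, cons_val_one, empty_val', cons_val_fin_one]
  · linear_combination (-a) * hu - (u ^ 2 * x * b - conj u * u * a) * ht
  · linear_combination (-(Complex.I * √(1 - x ^ 2) * b)) * hu
  · linear_combination (-(Complex.I * √(1 - x ^ 2) * b')) * hu
  · linear_combination (-a') * hu - (conj u ^ 2 * x * b' - conj u * u * a') * ht

theorem IsQSPPair.exists_qspU_eq_qspMat {d : ℕ} {P Q : ℂ[X]} (h : IsQSPPair d P Q) :
    ∃ Ψ : Fin (d + 1) → ℝ, ∀ x ∈ Set.Icc (-1 : ℝ) 1, qspU d Ψ x = qspMat P Q x := by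
  induction d generalizing P Q with
  | zero =>
    obtain ⟨p, hp, rfl, rfl⟩ := h.exists_eq_C
    refine ⟨fun _ => p.arg, fun x _ => ?_⟩
    have hexp : Complex.exp (Complex.I * p.arg) = p := by
      simpa [hp, mul_comm] using Complex.norm_mul_exp_arg_mul_I p
    rw [qspU_zero, exp_I_mul_smul_PZ, hexp, qspMat]
    simp
  | succ e ih =>
    obtain ⟨ψ, hψ⟩ := exists_phase_of_norm_eq <|
      norm_coeff_succ_eq_of_mul_map_conj_add_eq_one h.natDegree_P_le h.natDegree_Q_le
        h.mul_map_conj_add_eq_one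
    set u := Complex.exp (Complex.I * ψ)
    have hu : conj u * u = 1 := by
      rw [Complex.conj_mul', Complex.norm_exp_I_mul_ofReal, Complex.ofReal_one, one_pow]
    obtain ⟨Ψ, hΨ⟩ := ih (h.peel hu hψ)
    refine ⟨Fin.snoc Ψ ψ, fun x hx => ?_⟩
    rw [qspU_succ, Fin.init_snoc, Fin.snoc_last, hΨ x hx, exp_I_mul_arccos_smul_PX hx,
      exp_I_mul_smul_PZ]
    exact (qspMat_eq_qspMat_peel_mul hx hu).symm

theorem qsp_exists_phase_factors_general (d : ℕ) (P Q : Polynomial ℂ)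
    (hdegP : P.natDegree ≤ d)
    (hdegQ : Q.natDegree ≤ d - 1)
    (hparP : ∀ n : ℕ, P.coeff n ≠ 0 → n % 2 = d % 2)
    (hparQ : ∀ n : ℕ, Q.coeff n ≠ 0 → n % 2 = (d - 1) % 2)
    (hnorm : ∀ x : ℝ, x ∈ Set.Icc (-1 : ℝ) 1 →
      ‖P.eval (x : ℂ)‖ ^ 2
        + (1 - x ^ 2) * ‖Q.eval (x : ℂ)‖ ^ 2 = 1) :
    ∃ Ψ : Fin (d + 1) → ℝ,
      ∀ x : ℝ, x ∈ Set.Icc (-1 : ℝ) 1 → qspU d Ψ x = qspMat P Q x :=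
  IsQSPPair.exists_qspU_eq_qspMat
    ⟨hdegP, hdegQ, hparP, hparQ, mul_map_conj_add_eq_one_of_forall_Icc hnorm⟩

/-- QSP representation, converse direction: given complex polynomials `P, Q`
with the stated degree, parity and normalization conditions (`d ≥ 1`), there exists a set of
phase factors `Ψ ∈ ℝ^{d+1}` realizing `P, Q` via the QSP matrix form on `[-1,1]`. -/
theorem qsp_exists_phase_factors (d : ℕ) (hd : 1 ≤ d) (P Q : Polynomial ℂ)
    (hdegP : P.natDegree ≤ d)
    (hdegQ : Q.natDegree ≤ d - 1)
    (hparP : ∀ n : ℕ, P.coeff n ≠ 0 → n % 2 = d % 2)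
    (hparQ : ∀ n : ℕ, Q.coeff n ≠ 0 → n % 2 = (d - 1) % 2)
    (hnorm : ∀ x : ℝ, x ∈ Set.Icc (-1 : ℝ) 1 →
      ‖P.eval (x : ℂ)‖ ^ 2
        + (1 - x ^ 2) * ‖Q.eval (x : ℂ)‖ ^ 2 = 1) :
    ∃ Ψ : Fin (d + 1) → ℝ,
      ∀ x : ℝ, x ∈ Set.Icc (-1 : ℝ) 1 → qspU d Ψ x = qspMat P Q x :=
  qsp_exists_phase_factors_general d P Q hdegP hdegQ hparP hparQ hnorm
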